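/- Let F be a finite field, let 1 ≤ k < n, and let G be a k×n minimal-basic polynomial generator matrix of a convolutional code C with degree δ = 2k. Suppose C is an MDS convolutional code, i.e. d_free(C) attains the generalized Singleton bound: d_free(C) = (n−k)·(⌊2k/k⌋ + 1) + 2k + 1 (= 3n − k + 1). Then T_{dfree}(C) ≤ 6nk − 2k² + 1; equivalently, every pair (u,j) determining an element of S_{dfree} satisfies j ≤ 6nk − 2k². -/

import Mathlib

open Polynomial Matrix

/-- The encoding map of a convolutional code with polynomial generator matrix `G`:
an information sequence `u ∈ F[[z]]^b` is mapped to the codeword `u · G ∈ F[[z]]^c`. -/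
noncomputable def encode {F : Type*} [Field F] {b c : ℕ}
    (G : Matrix (Fin b) (Fin c) (Polynomial F)) (u : Fin b → PowerSeries F) :
    Fin c → PowerSeries F :=
  fun j => ∑ i, u i * (G i j : PowerSeries F)

/-- Hamming weight of `v ∈ F[[z]]^c`: the extended-natural-number cardinality of the
set of pairs `(l, t)` such that `coeff_t (v_l) ≠ 0`. -/
noncomputable def wH {F : Type*} [Field F] {c : ℕ} (v : Fin c → PowerSeries F) : ℕ∞ :=
  {p : Fin c × ℕ | PowerSeries.coeff (R := F) p.2 (v p.1) ≠ 0}.encard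

/-- Free distance of the convolutional code generated by `G`. -/
noncomputable def dfree {F : Type*} [Field F] {b c : ℕ}
    (G : Matrix (Fin b) (Fin c) (Polynomial F)) : ℕ∞ :=
  sInf {w : ℕ∞ | ∃ v : Fin c → PowerSeries F,
    (∃ u : Fin b → PowerSeries F, v = encode G u) ∧ v ≠ 0 ∧ w = wH v}

/-- Total Hamming weight of segments `0, …, j-1` of `v`. -/
noncomputable def truncWeight {F : Type*} [Field F] {c : ℕ}
    (v : Fin c → PowerSeries F) (j : ℕ) : ℕ∞ :=
  {p : Fin c × ℕ | p.2 < j ∧ PowerSeries.coeff (R := F) p.2 (v p.1) ≠ 0}.encard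

/-- `i`-th row degree of `G`: the maximum of the natural degrees of the entries of row `i`. -/
def rowDeg {F : Type*} [Field F] {b c : ℕ}
    (G : Matrix (Fin b) (Fin c) (Polynomial F)) (i : Fin b) : ℕ :=
  Finset.univ.sup fun j => (G i j).natDegree

/-- Degree `δ` of `G`: the sum of its row degrees. -/
def degG {F : Type*} [Field F] {b c : ℕ}
    (G : Matrix (Fin b) (Fin c) (Polynomial F)) : ℕ :=
  ∑ i, rowDeg G i

/-- The controller-canonical encoder state `σ_t(u)` of `G` is nonzero: some component
`coeff_{t-s} (u_i)` with `1 ≤ s ≤ ν_i` (and `s ≤ t`, since coefficients with negative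
index are taken to be `0`) is nonzero. -/
def stateNonzero {F : Type*} [Field F] {b c : ℕ}
    (G : Matrix (Fin b) (Fin c) (Polynomial F)) (u : Fin b → PowerSeries F) (t : ℕ) : Prop :=
  ∃ i : Fin b, ∃ s : ℕ, 1 ≤ s ∧ s ≤ rowDeg G i ∧ s ≤ t ∧
    PowerSeries.coeff (R := F) (t - s) (u i) ≠ 0

/-- `G` is a generator matrix: it has rank `b` over the field of rational functions `F(z)`. -/
def IsGenerator {F : Type*} [Field F] {b c : ℕ}
    (G : Matrix (Fin b) (Fin c) (Polynomial F)) : Prop :=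
  (G.map (algebraMap (Polynomial F) (RatFunc F))).rank = b

/-- `G` is basic: it has a polynomial right inverse. -/
def IsBasic {F : Type*} [Field F] {b c : ℕ}
    (G : Matrix (Fin b) (Fin c) (Polynomial F)) : Prop :=
  ∃ H : Matrix (Fin c) (Fin b) (Polynomial F), G * H = 1

/-- The high-order coefficient matrix `[G]_h` of `G`. -/
def highOrder {F : Type*} [Field F] {b c : ℕ}
    (G : Matrix (Fin b) (Fin c) (Polynomial F)) : Matrix (Fin b) (Fin c) F :=
  fun i j => (G i j).coeff (rowDeg G i)

/-- `G` is minimal-basic: basic, and `[G]_h` has full row rank `b` over `F`. -/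
def IsMinimalBasic {F : Type*} [Field F] {b c : ℕ}
    (G : Matrix (Fin b) (Fin c) (Polynomial F)) : Prop :=
  IsBasic G ∧ (highOrder G).rank = b

/-- `(u, j)` determines an element of `S_{dfree}`: `j > 0`, the total Hamming weight of
segments `0, …, j-1` of `u·G` is strictly less than `d_free`, and `σ_t(u) ≠ 0` for all
`1 ≤ t ≤ j`. -/
def SdfreePair {F : Type*} [Field F] {b c : ℕ}
    (G : Matrix (Fin b) (Fin c) (Polynomial F)) (u : Fin b → PowerSeries F) (j : ℕ) : Prop :=
  0 < j ∧ truncWeight (encode G u) j < dfree G ∧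
    ∀ t : ℕ, 1 ≤ t → t ≤ j → stateNonzero G u t

/-!
For a minimal-basic encoder of degree `δ`, a nonzero controller-canonical state forces a nonzero
output segment within the next `δ` time steps. Indeed, the states admitting `L` further steps of
zero output form a decreasing chain of subspaces of the `δ`-dimensional state space, so the chain
is stationary from `L = δ` on, and a state admitting `δ` such steps admits infinitely many. The
resulting input has eventually vanishing output, hence is polynomial because `G` has a polynomial
right inverse; the predictable degree property of a minimal-basic `G` then produces a nonzero
output coefficient at or after the current time, a contradiction.

For `(u, j)` in `S_dfree` all the states `σ_1, …, σ_j` are nonzero, and so is segment `0`;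
therefore among the segments `0, …, j - 1` at least `1 + ⌊(j - 1) / δ⌋` are nonzero. Fewer than
`d_free = 3(n - k) + 2k + 1` of them can be nonzero, which gives `j ≤ 2k (3(n - k) + 2k)`.
-/

theorem Matrix.eq_zero_of_vecMul_eq_zero_of_rank_eq_card {K m n : Type*} [Field K] [Fintype m]
    [Fintype n] {M : Matrix m n K} (hM : M.rank = Fintype.card m) {y : m → K}
    (hy : y ᵥ* M = 0) : y = 0 := by
  have hrows : LinearIndependent K M.row := linearIndependent_iff_card_eq_finrank_span.mpr
    (by rw [Set.finrank, ← M.rank_eq_finrank_span_row, hM])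
  have hsum : ∑ i, y i • M.row i = 0 := by rw [← hy, vecMul_eq_sum]; rfl
  ext i
  exact Fintype.linearIndependent_iff.mp hrows y hsum i

theorem Submodule.isFixedPt_iterate_finrank_top {K V : Type*} [Field K] [AddCommGroup V]
    [Module K V] [FiniteDimensional K V] {Φ : Submodule K V → Submodule K V} (hΦ : Monotone Φ) :
    Function.IsFixedPt Φ (Φ^[Module.finrank K V] ⊤) := by
  have hanti : Antitone fun L => Φ^[L] ⊤ := hΦ.antitone_iterate_of_map_le le_top
  obtain ⟨L, hL, hfix⟩ : ∃ L ≤ Module.finrank K V, Function.IsFixedPt Φ (Φ^[L] ⊤) := by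
    by_contra! hstrict
    have hdrop : ∀ L ≤ Module.finrank K V + 1,
        Module.finrank K (Φ^[L] ⊤) + L ≤ Module.finrank K V := by
      intro L
      induction L with
      | zero => intro _; simpa using (Φ^[0] ⊤).finrank_le
      | succ L ih =>
        intro hL
        have hlt : Φ^[L + 1] ⊤ < Φ^[L] ⊤ := by
          refine lt_of_le_of_ne (hanti L.le_succ) ?_
          rw [Function.iterate_succ_apply']
          exact hstrict L (by omega)
        have := Submodule.finrank_lt_finrank_of_lt hlt
        have := ih (by omega)
        omega
    have := hdrop _ le_rfl
    omega
  rwa [← Nat.add_sub_cancel' hL, add_comm, Function.iterate_add_apply,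
    Function.iterate_fixed hfix]

section LinearSystem

variable {K S X Y : Type*} [Field K] [AddCommGroup S] [Module K S] [AddCommGroup X] [Module K X]
  [AddCommGroup Y] [Module K Y] (out : S × X →ₗ[K] Y) (next : S × X →ₗ[K] S)

/-- Iterating this map `L` times on `⊤` gives the states of the linear system `(out, next)` from
which some input keeps the output zero for `L` steps. -/
def zeroOutputPre (Q : Submodule K S) : Submodule K S :=
  (LinearMap.ker out ⊓ Q.comap next).map (LinearMap.fst K S X)

theorem zeroOutputPre_mono : Monotone (zeroOutputPre out next) := fun _ _ h =>
  Submodule.map_mono (inf_le_inf_left _ (Submodule.comap_mono h))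

theorem exists_zeroOutput_trajectory [FiniteDimensional K S] {σ : S}
    (hσ : σ ∈ (zeroOutputPre out next)^[Module.finrank K S] ⊤) :
    ∃ (s : ℕ → S) (x : ℕ → X), s 0 = σ ∧
      ∀ t, s (t + 1) = next (s t, x t) ∧ out (s t, x t) = 0 := by
  set P := (zeroOutputPre out next)^[Module.finrank K S] ⊤
  have hstep : ∀ τ : P, ∃ x : X, out (τ, x) = 0 ∧ next (τ, x) ∈ P := by
    intro τ
    have hτ : (τ : S) ∈ zeroOutputPre out next P :=
      (Submodule.isFixedPt_iterate_finrank_top (zeroOutputPre_mono out next)).symm ▸ τ.2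
    obtain ⟨⟨σ', x⟩, ⟨hout, hnext⟩, rfl⟩ := hτ
    exact ⟨x, hout, hnext⟩
  choose x hx using hstep
  let traj : ℕ → P := fun t => Nat.rec ⟨σ, hσ⟩ (fun _ τ => ⟨next (τ, x τ), (hx τ).2⟩) t
  exact ⟨fun t => (traj t).1, fun t => x (traj t), rfl, fun t => ⟨rfl, (hx (traj t)).1⟩⟩

end LinearSystem

theorem PowerSeries.coeff_mul_coe_of_natDegree_le {R : Type*} [CommRing R] (u : PowerSeries R)
    {g : R[X]} {ν : ℕ} (hg : g.natDegree ≤ ν) (t : ℕ) :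
    coeff t (u * (g : PowerSeries R)) =
      ∑ r ∈ Finset.range (ν + 1), g.coeff r * coeff t (X ^ r * u) := by
  have hsum : (g : PowerSeries R) = ∑ r ∈ Finset.range (ν + 1), C (g.coeff r) * X ^ r := by
    conv_lhs => rw [g.as_sum_range_C_mul_X_pow' (by omega : g.natDegree < ν + 1)]
    simp only [← Polynomial.coeToPowerSeries.ringHom_apply, map_sum, map_mul, map_pow]
    simp
  simp only [hsum, Finset.mul_sum, map_sum]
  refine Finset.sum_congr rfl fun r _ => ?_
  rw [← PowerSeries.coeff_C_mul]
  ring_nf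

theorem PowerSeries.coe_trunc_of_coeff_eq_zero {R : Type*} [CommRing R] {f : PowerSeries R}
    {N : ℕ} (h : ∀ t, N ≤ t → coeff t f = 0) : (trunc N f : PowerSeries R) = f := by
  ext t
  rw [Polynomial.coeff_coe, coeff_trunc]
  split_ifs with ht
  · rfl
  · exact (h t (not_lt.mp ht)).symm

section Encoder

variable {F : Type*} [Field F] {b c : ℕ}

theorem natDegree_le_rowDeg (G : Matrix (Fin b) (Fin c) F[X]) (i : Fin b) (l : Fin c) :
    (G i l).natDegree ≤ rowDeg G i :=
  Finset.le_sup (f := fun l => (G i l).natDegree) (Finset.mem_univ l)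

theorem encode_eq_vecMul (G : Matrix (Fin b) (Fin c) F[X]) (u : Fin b → PowerSeries F) :
    encode G u = u ᵥ* G.map Polynomial.coeToPowerSeries.ringHom :=
  rfl

theorem encode_coe (G : Matrix (Fin b) (Fin c) F[X]) (p : Fin b → F[X]) :
    encode G (fun i => (p i : PowerSeries F)) = fun l => ((p ᵥ* G) l : PowerSeries F) :=
  funext fun l => (RingHom.map_vecMul Polynomial.coeToPowerSeries.ringHom G p l).symm

theorem encode_vecMul_eq_of_mul_eq_one {G : Matrix (Fin b) (Fin c) F[X]}
    {H : Matrix (Fin c) (Fin b) F[X]} (hGH : G * H = 1) (u : Fin b → PowerSeries F) :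
    encode G u ᵥ* H.map Polynomial.coeToPowerSeries.ringHom = u := by
  rw [encode_eq_vecMul, vecMul_vecMul, ← Matrix.map_mul, hGH,
    Matrix.map_one _ (map_zero _) (map_one _), vecMul_one]

theorem exists_eq_coe_of_coeff_encode_eq_zero {G : Matrix (Fin b) (Fin c) F[X]} (hG : IsBasic G)
    {u : Fin b → PowerSeries F} {N : ℕ}
    (hu : ∀ t, N ≤ t → ∀ l, PowerSeries.coeff t (encode G u l) = 0) :
    ∃ p : Fin b → F[X], u = fun i => (p i : PowerSeries F) := by
  obtain ⟨H, hGH⟩ := hG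
  set q : Fin c → F[X] := fun l => PowerSeries.trunc N (encode G u l)
  have hq : encode G u = fun l => (q l : PowerSeries F) :=
    funext fun l => (PowerSeries.coe_trunc_of_coeff_eq_zero fun t ht => hu t ht l).symm
  refine ⟨q ᵥ* H, funext fun i => ?_⟩
  rw [← encode_vecMul_eq_of_mul_eq_one hGH u, hq]
  exact (RingHom.map_vecMul Polynomial.coeToPowerSeries.ringHom H q i).symm

theorem constantCoeff_eq_zero_of_constantCoeff_encode_eq_zero {G : Matrix (Fin b) (Fin c) F[X]}
    (hG : IsBasic G) {u : Fin b → PowerSeries F}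
    (hu : ∀ l, PowerSeries.constantCoeff (encode G u l) = 0) (i : Fin b) :
    PowerSeries.constantCoeff (u i) = 0 := by
  obtain ⟨H, hGH⟩ := hG
  rw [← encode_vecMul_eq_of_mul_eq_one hGH u]
  simp [vecMul, dotProduct, hu]

/-- The predictable degree property of a generator matrix with full-rank `[G]_h`. -/
theorem exists_coeff_vecMul_ne_zero_of_rank_highOrder {G : Matrix (Fin b) (Fin c) F[X]}
    (hG : (highOrder G).rank = b) {p : Fin b → F[X]} {i₀ : Fin b} (hp : p i₀ ≠ 0) :
    ∃ l D, (p i₀).natDegree + rowDeg G i₀ ≤ D ∧ ((p ᵥ* G) l).coeff D ≠ 0 := by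
  classical
  set S := Finset.univ.filter fun i => p i ≠ 0
  obtain ⟨i₁, hi₁, hmax⟩ :=
    S.exists_max_image (fun i => (p i).natDegree + rowDeg G i) ⟨i₀, by simpa [S] using hp⟩
  set D := (p i₁).natDegree + rowDeg G i₁
  set y : Fin b → F := fun i => (p i).coeff (D - rowDeg G i)
  have hcoeff : ∀ l, ((p ᵥ* G) l).coeff D = (y ᵥ* highOrder G) l := by
    intro l
    simp only [vecMul, dotProduct, finsetSum_coeff]
    refine Finset.sum_congr rfl fun i _ => ?_
    by_cases hpi : p i = 0
    · simp [y, hpi]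
    have hle := hmax i (by simpa [S] using hpi)
    rw [show D = (D - rowDeg G i) + rowDeg G i by omega,
      coeff_mul_add_eq_of_natDegree_le (by omega) (natDegree_le_rowDeg G i l)]
    rfl
  have hy : y ≠ 0 := fun h => by
    have := congr_fun h i₁
    simp only [y, D, Nat.add_sub_cancel, Pi.zero_apply, coeff_natDegree] at this
    simp_all [S]
  obtain ⟨l, hl⟩ : ∃ l, (y ᵥ* highOrder G) l ≠ 0 := by
    by_contra! h
    exact hy (Matrix.eq_zero_of_vecMul_eq_zero_of_rank_eq_card (by simpa using hG) (funext h))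
  exact ⟨l, D, hmax i₀ (by simpa [S] using hp), by rwa [hcoeff]⟩

end Encoder

section Controller

variable {F : Type*} [Field F] {b c : ℕ} (G : Matrix (Fin b) (Fin c) F[X])

abbrev ControllerState := ∀ i : Fin b, Fin (rowDeg G i) → F

/-- Entry `(i, s)` is `coeff_{t - (s + 1)} (u_i)` (zero if `t < s + 1`), i.e. the component of
`σ_t(u)` with delay `s + 1`. -/
noncomputable def controllerState (u : Fin b → PowerSeries F) (t : ℕ) : ControllerState G :=
  fun i s => PowerSeries.coeff t (PowerSeries.X ^ (s + 1 : ℕ) * u i)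

def controllerOutput : ControllerState G × (Fin b → F) →ₗ[F] (Fin c → F) where
  toFun p l := ∑ i, (p.2 i * (G i l).coeff 0 + ∑ s, p.1 i s * (G i l).coeff (s + 1))
  map_add' p q := by
    ext l
    simp only [Prod.fst_add, Prod.snd_add, Pi.add_apply, add_mul, Finset.sum_add_distrib]
    ring
  map_smul' r p := by
    ext l
    simp only [Prod.smul_fst, Prod.smul_snd, Pi.smul_apply, smul_eq_mul, Finset.mul_sum, mul_add,
      mul_assoc, RingHom.id_apply]

def controllerNext : ControllerState G × (Fin b → F) →ₗ[F] ControllerState G where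
  toFun p i s := if h : (s : ℕ) = 0 then p.2 i else p.1 i ⟨s - 1, by omega⟩
  map_add' p q := by
    ext i s
    by_cases h : (s : ℕ) = 0 <;> simp [h]
  map_smul' r p := by
    ext i s
    by_cases h : (s : ℕ) = 0 <;> simp [h]

theorem finrank_controllerState : Module.finrank F (ControllerState G) = degG G := by
  simp [Module.finrank_pi_fintype, degG]

theorem controllerState_succ (u : Fin b → PowerSeries F) (t : ℕ) :
    controllerState G u (t + 1) =
      controllerNext G (controllerState G u t, fun i => PowerSeries.coeff t (u i)) := by
  ext i s
  simp only [controllerState, controllerNext, LinearMap.coe_mk, AddHom.coe_mk]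
  split_ifs with hs
  · simp [hs]
  · rw [Nat.sub_add_cancel (Nat.pos_of_ne_zero hs), pow_succ', mul_assoc,
      PowerSeries.coeff_succ_X_mul]

theorem coeff_encode_eq_controllerOutput (u : Fin b → PowerSeries F) (t : ℕ) (l : Fin c) :
    PowerSeries.coeff t (encode G u l) =
      controllerOutput G (controllerState G u t, fun i => PowerSeries.coeff t (u i)) l := by
  simp only [encode, controllerOutput, controllerState, LinearMap.coe_mk, AddHom.coe_mk, map_sum]
  refine Finset.sum_congr rfl fun i _ => ?_
  rw [PowerSeries.coeff_mul_coe_of_natDegree_le _ (natDegree_le_rowDeg G i l),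
    Finset.sum_range_succ', Fin.sum_univ_eq_sum_range
      (fun s => PowerSeries.coeff t (PowerSeries.X ^ (s + 1) * u i) * (G i l).coeff (s + 1))]
  simp [mul_comm, add_comm]

theorem controllerState_mem_iterate_zeroOutputPre (u : Fin b → PowerSeries F) (L : ℕ) :
    ∀ a, (∀ t, a ≤ t → t < a + L → ∀ l, PowerSeries.coeff t (encode G u l) = 0) →
      controllerState G u a ∈ (zeroOutputPre (controllerOutput G) (controllerNext G))^[L] ⊤ := by
  induction L with
  | zero => exact fun _ _ => Submodule.mem_top
  | succ L ih =>
    intro a hzero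
    rw [Function.iterate_succ_apply']
    refine ⟨(controllerState G u a, fun i => PowerSeries.coeff a (u i)), ⟨?_, ?_⟩, rfl⟩
    · ext l
      rw [← coeff_encode_eq_controllerOutput]
      exact hzero a le_rfl (by omega) l
    · rw [SetLike.mem_coe, Submodule.mem_comap, ← controllerState_succ]
      exact ih (a + 1) fun t ht ht' => hzero t (by omega) (by omega)

theorem controllerState_ne_zero_of_stateNonzero {u : Fin b → PowerSeries F} {t : ℕ}
    (h : stateNonzero G u t) : controllerState G u t ≠ 0 := by
  obtain ⟨i, s, hs, hsν, hst, hcoeff⟩ := h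
  intro hzero
  have := congr_fun₂ hzero i ⟨s - 1, by omega⟩
  simp only [controllerState, Nat.sub_add_cancel hs, PowerSeries.coeff_X_pow_mul', if_pos hst]
    at this
  exact hcoeff this

variable {G}

theorem controllerState_congr {u w : Fin b → PowerSeries F} {a : ℕ}
    (h : ∀ i, ∀ r < a, PowerSeries.coeff r (w i) = PowerSeries.coeff r (u i)) :
    controllerState G w a = controllerState G u a := by
  ext i s
  simp only [controllerState, PowerSeries.coeff_X_pow_mul']
  split_ifs with hs
  · exact h i _ (by omega)
  · rfl

theorem exists_zeroOutput_continuation {u : Fin b → PowerSeries F} {a : ℕ}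
    (hu : controllerState G u a ∈ (zeroOutputPre (controllerOutput G) (controllerNext G))^[
      Module.finrank F (ControllerState G)] ⊤) :
    ∃ w : Fin b → PowerSeries F, controllerState G w a = controllerState G u a ∧
      ∀ t, a ≤ t → ∀ l, PowerSeries.coeff t (encode G w l) = 0 := by
  obtain ⟨s, x, hs0, hstep⟩ := exists_zeroOutput_trajectory _ _ hu
  let w : Fin b → PowerSeries F := fun i =>
    PowerSeries.mk fun r => if r < a then PowerSeries.coeff r (u i) else x (r - a) i
  have hw_past : controllerState G w a = controllerState G u a :=
    controllerState_congr fun i r hr => by simp [w, hr]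
  have hw_future : ∀ t, (fun i => PowerSeries.coeff (a + t) (w i)) = x t := fun t => by
    ext i
    simp [w]
  have hstate : ∀ t, controllerState G w (a + t) = s t := by
    intro t
    induction t with
    | zero => rw [add_zero, hw_past, hs0]
    | succ t ih => rw [← add_assoc, controllerState_succ, ih, hw_future, (hstep t).1]
  refine ⟨w, hw_past, fun t ht l => ?_⟩
  obtain ⟨t, rfl⟩ := Nat.exists_eq_add_of_le ht
  rw [coeff_encode_eq_controllerOutput, hstate, hw_future, (hstep t).2]
  rfl

theorem controllerState_eq_zero_of_coeff_encode_eq_zero (hG : IsMinimalBasic G)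
    {w : Fin b → PowerSeries F} {a : ℕ}
    (hw : ∀ t, a ≤ t → ∀ l, PowerSeries.coeff t (encode G w l) = 0) :
    controllerState G w a = 0 := by
  obtain ⟨p, rfl⟩ := exists_eq_coe_of_coeff_encode_eq_zero hG.1 hw
  by_contra hne
  obtain ⟨i, s, hs⟩ : ∃ i s, controllerState G (fun i => (p i : PowerSeries F)) a i s ≠ 0 := by
    by_contra! h
    exact hne (funext fun i => funext (h i))
  simp only [controllerState, PowerSeries.coeff_X_pow_mul', Polynomial.coeff_coe] at hs
  split_ifs at hs with hsa
  · have hdeg := le_natDegree_of_ne_zero hs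
    obtain ⟨l, D, hD, hcoeff⟩ := exists_coeff_vecMul_ne_zero_of_rank_highOrder (p := p) hG.2
      (fun h => hs (by rw [h, Polynomial.coeff_zero]))
    apply hcoeff
    rw [← Polynomial.coeff_coe, ← congr_fun (encode_coe G p) l]
    exact hw D (by have := s.isLt; omega) l
  · exact hs rfl

theorem exists_coeff_encode_ne_zero_of_controllerState_ne_zero (hG : IsMinimalBasic G)
    {u : Fin b → PowerSeries F} {a : ℕ} (hu : controllerState G u a ≠ 0) :
    ∃ t, a ≤ t ∧ t < a + degG G ∧ ∃ l, PowerSeries.coeff t (encode G u l) ≠ 0 := by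
  by_contra! hzero
  have hmem := controllerState_mem_iterate_zeroOutputPre G u (degG G) a hzero
  rw [← finrank_controllerState] at hmem
  obtain ⟨w, hw_state, hw_zero⟩ := exists_zeroOutput_continuation hmem
  exact hu (hw_state ▸ controllerState_eq_zero_of_coeff_encode_eq_zero hG hw_zero)

end Controller

theorem le_mul_card_of_forall_window {T : Finset ℕ} {d j : ℕ} (h0 : 0 ∈ T)
    (hwindow : ∀ a, 1 ≤ a → a + d ≤ j → ∃ t ∈ T, a ≤ t ∧ t < a + d) : j ≤ d * T.card := by
  have hcount : ∀ m, 1 + m * d ≤ j → m + 1 ≤ (T.filter (· < 1 + m * d)).card := by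
    intro m
    induction m with
    | zero => exact fun _ => Finset.card_pos.mpr ⟨0, Finset.mem_filter.mpr ⟨h0, by omega⟩⟩
    | succ m ih =>
      intro hm
      rw [add_one_mul] at hm ⊢
      obtain ⟨t, htT, hmt, htm⟩ := hwindow (1 + m * d) (by omega) (by omega)
      have hnew : t ∉ T.filter (· < 1 + m * d) := by simp [hmt]
      have hsub : insert t (T.filter (· < 1 + m * d)) ⊆ T.filter (· < 1 + (m * d + d)) := by
        intro s hs
        simp only [Finset.mem_insert, Finset.mem_filter] at hs ⊢
        rcases hs with rfl | ⟨hsT, hs⟩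
        exacts [⟨htT, by omega⟩, ⟨hsT, by omega⟩]
      calc m + 1 + 1 ≤ (insert t (T.filter (· < 1 + m * d))).card := by
            rw [Finset.card_insert_of_notMem hnew]; exact Nat.succ_le_succ (ih (by omega))
        _ ≤ _ := Finset.card_le_card hsub
  by_contra! hj
  have := hcount T.card (by rw [mul_comm]; omega)
  have := Finset.card_le_card (Finset.filter_subset (· < 1 + T.card * d) T)
  omega

theorem card_le_truncWeight {F : Type*} [Field F] {c : ℕ} {v : Fin c → PowerSeries F} {j : ℕ}
    {T : Finset ℕ} (hT : ∀ t ∈ T, t < j ∧ ∃ l, PowerSeries.coeff t (v l) ≠ 0) :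
    (T.card : ℕ∞) ≤ truncWeight v j := by
  rw [← Set.encard_coe_eq_coe_finsetCard, truncWeight]
  refine (Set.encard_le_encard fun t ht => ?_).trans (Set.encard_image_le Prod.snd _)
  obtain ⟨htj, l, hl⟩ := hT t ht
  exact ⟨(l, t), ⟨htj, hl⟩, rfl⟩

theorem Tdfree_le_of_MDS_general
    {F : Type*} [Field F] {k n : ℕ} (hk : 1 ≤ k) (hkn : k < n)
    (G : Matrix (Fin k) (Fin n) (Polynomial F))
    (hMB : IsMinimalBasic G) (hδ : degG G = 2 * k)
    (hMDS : dfree G = (((n - k) * (2 * k / k + 1) + 2 * k + 1 : ℕ) : ℕ∞)) :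
    ∀ (u : Fin k → PowerSeries F) (j : ℕ), 0 < j → SdfreePair G u j →
      j ≤ 6 * n * k - 2 * k ^ 2 := by
  classical
  rintro u j hj ⟨-, hweight, hstate⟩
  set T := (Finset.range j).filter fun t => ∃ l, PowerSeries.coeff t (encode G u l) ≠ 0
  have hT : ∀ t ∈ T, t < j ∧ ∃ l, PowerSeries.coeff t (encode G u l) ≠ 0 := by simp [T]
  have h0 : 0 ∈ T := by
    obtain ⟨i, s, hs, -, hs1, hcoeff⟩ := hstate 1 le_rfl hj
    by_contra hout
    have hzero : ∀ l, PowerSeries.constantCoeff (encode G u l) = 0 := by simpa [T, hj] using hout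
    apply hcoeff
    simpa [show s = 1 by omega] using
      constantCoeff_eq_zero_of_constantCoeff_encode_eq_zero hMB.1 hzero i
  have hwindow : ∀ a, 1 ≤ a → a + degG G ≤ j → ∃ t ∈ T, a ≤ t ∧ t < a + degG G := by
    intro a ha haj
    obtain ⟨t, hat, hta, hnz⟩ := exists_coeff_encode_ne_zero_of_controllerState_ne_zero hMB
      (controllerState_ne_zero_of_stateNonzero G (hstate a ha (by omega)))
    exact ⟨t, Finset.mem_filter.mpr ⟨Finset.mem_range.mpr (by omega), hnz⟩, hat, hta⟩
  have hcard : T.card ≤ (n - k) * 3 + 2 * k := by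
    have := (card_le_truncWeight hT).trans_lt (hMDS ▸ hweight)
    rw [Nat.mul_div_cancel 2 hk] at this
    exact Nat.lt_succ_iff.mp (by exact_mod_cast this)
  calc j ≤ degG G * T.card := le_mul_card_of_forall_window h0 hwindow
    _ ≤ 2 * k * ((n - k) * 3 + 2 * k) := by rw [hδ]; exact Nat.mul_le_mul_left _ hcard
    _ = 6 * n * k - 2 * k ^ 2 := by
      obtain ⟨m, rfl⟩ := Nat.exists_eq_add_of_le hkn.le
      rw [Nat.add_sub_cancel_left]
      exact Nat.eq_sub_of_add_eq (by ring)

/-- for a minimal-basic generator matrix of a `(n, k, δ = 2k)` MDS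
convolutional code (whose free distance attains the generalized Singleton bound),
`T_{dfree}(C) ≤ 6nk − 2k² + 1`; equivalently, every pair `(u, j)` determining an element
of `S_{dfree}` satisfies `j ≤ 6nk − 2k²`. -/
theorem Tdfree_le_of_MDS
    {F : Type*} [Field F] [Fintype F] {k n : ℕ} (hk : 1 ≤ k) (hkn : k < n)
    (G : Matrix (Fin k) (Fin n) (Polynomial F))
    (hGen : IsGenerator G) (hMB : IsMinimalBasic G) (hδ : degG G = 2 * k)
    (hMDS : dfree G = (((n - k) * (2 * k / k + 1) + 2 * k + 1 : ℕ) : ℕ∞)) :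
    ∀ (u : Fin k → PowerSeries F) (j : ℕ), 0 < j → SdfreePair G u j →
      j ≤ 6 * n * k - 2 * k ^ 2 :=
  Tdfree_le_of_MDS_general hk hkn G hMB hδ hMDS
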